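/- In the split equilibrium setting, assume f is pseudomonotone on C, F is pseudomonotone on Q, and the solution set Ω is nonempty. Let {x_n}, {u_n}, {z_n} be generated by the projection algorithm with parameter sequences satisfying ρ_n ≥ ρ > 0, ε_n ≥ 0, β_n > 0, Σ β_n ε_n/ρ_n < ∞, Σ β_n² < ∞, and 0 < a ≤ μ_n with μ_n‖A‖² ≤ 1. Then ‖x_{n+1} − z_n‖ → 0 and ‖u_n − Ax_n‖ → 0 as n → ∞, and the sequences {z_n} and {u_n} are bounded. -/
import Mathlib


open RealInnerProductSpace Filter

/-- `z` is the metric projection of `v` onto `K`. -/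
def IsProjOn {H : Type*} [NormedAddCommGroup H] [InnerProductSpace ℝ H]
    (K : Set H) (v z : H) : Prop :=
  z ∈ K ∧ ∀ y ∈ K, (⟪v - z, y - z⟫) ≤ 0

/-- `g` is an `ε`-diagonal subgradient of the bifunction `f` at `z` over `K`,
i.e. `f(z,y) + ε ≥ ⟨g, y - z⟩` for all `y ∈ K`. -/
def IsDiagSubgrad {H : Type*} [NormedAddCommGroup H] [InnerProductSpace ℝ H]
    (K : Set H) (f : H → H → ℝ) (ε : ℝ) (z g : H) : Prop :=
  ∀ y ∈ K, (⟪g, y - z⟫) ≤ f z y + ε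

lemma proj_sq_le {H : Type*} [NormedAddCommGroup H] [InnerProductSpace ℝ H]
    {K : Set H} {v z p : H} (h : IsProjOn K v z) (hp : p ∈ K) :
    ‖z - p‖ ^ 2 ≤ ‖v - p‖ ^ 2 - ‖v - z‖ ^ 2 := by
  have h1 : (⟪v - z, p - z⟫) ≤ 0 := h.2 p hp
  have h2 : v - p = (v - z) + (z - p) := by abel
  have h3 : ‖v - p‖ ^ 2 = ‖v - z‖ ^ 2 + 2 * ⟪v - z, z - p⟫ + ‖z - p‖ ^ 2 := by
    rw [h2, norm_add_sq_real]
  have h4 : ⟪v - z, z - p⟫ = -⟪v - z, p - z⟫ := by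
    rw [← inner_neg_right]; congr 1; abel
  linarith [h3, h4]

lemma expand_sq {H : Type*} [NormedAddCommGroup H] [InnerProductSpace ℝ H]
    (v w zz : H) (t : ℝ) :
    ‖v + t • w - zz‖ ^ 2 = ‖v - zz‖ ^ 2 + 2 * t * ⟪w, v - zz⟫ + t ^ 2 * ‖w‖ ^ 2 := by
  have h2 : v + t • w - zz = (v - zz) + t • w := by abel
  rw [h2, norm_add_sq_real, real_inner_smul_right, norm_smul]
  simp [Real.norm_eq_abs, mul_pow, sq_abs, real_inner_comm]
  ring

lemma norm_adj {H₁ H₂ : Type*}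
    [NormedAddCommGroup H₁] [InnerProductSpace ℝ H₁] [CompleteSpace H₁]
    [NormedAddCommGroup H₂] [InnerProductSpace ℝ H₂] [CompleteSpace H₂]
    (A : H₁ →L[ℝ] H₂) (v : H₂) :
    ‖(ContinuousLinearMap.adjoint A) v‖ ≤ ‖A‖ * ‖v‖ := by
  calc ‖(ContinuousLinearMap.adjoint A) v‖ ≤ ‖ContinuousLinearMap.adjoint A‖ * ‖v‖ :=
        (ContinuousLinearMap.adjoint A).le_opNorm v
    _ = ‖A‖ * ‖v‖ := by rw [ContinuousLinearMap.adjoint.norm_map]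

lemma tendsto_norm_of_sq {v : ℕ → ℝ} (hnn : ∀ n, 0 ≤ v n)
    (h : Tendsto (fun n => v n ^ 2) atTop (nhds 0)) : Tendsto v atTop (nhds 0) := by
  have h2 := (Real.continuous_sqrt.tendsto 0).comp h
  rw [Real.sqrt_zero] at h2
  exact h2.congr fun n => Real.sqrt_sq (hnn n)

set_option maxHeartbeats 2000000 in
/-- Lemma 3.6(ii): `‖x_{n+1} − z_n‖ → 0`, `‖u_n − Ax_n‖ → 0`,
and `{z_n}`, `{u_n}` are bounded. -/
theorem stmt6 {H₁ H₂ : Type*}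
    [NormedAddCommGroup H₁] [InnerProductSpace ℝ H₁] [CompleteSpace H₁]
    [NormedAddCommGroup H₂] [InnerProductSpace ℝ H₂] [CompleteSpace H₂]
    (C : Set H₁) (hCne : C.Nonempty) (hCcl : IsClosed C) (hCcv : Convex ℝ C)
    (Q : Set H₂) (hQne : Q.Nonempty) (hQcl : IsClosed Q) (hQcv : Convex ℝ Q)
    (A : H₁ →L[ℝ] H₂)
    (f : H₁ → H₁ → ℝ) (hf0 : ∀ x ∈ C, f x x = 0)
    (F : H₂ → H₂ → ℝ) (hF0 : ∀ u ∈ Q, F u u = 0)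
    (hfpm : ∀ x ∈ C, ∀ y ∈ C, 0 ≤ f x y → f y x ≤ 0)
    (hFpm : ∀ u ∈ Q, ∀ v ∈ Q, 0 ≤ F u v → F v u ≤ 0)
    (ρseq εseq βseq μseq : ℕ → ℝ) (ρ a : ℝ)
    (hρ : 0 < ρ) (hρn : ∀ n, ρ ≤ ρseq n)
    (hεn : ∀ n, 0 ≤ εseq n) (hβn : ∀ n, 0 < βseq n)
    (hsum1 : Summable (fun n => βseq n * εseq n / ρseq n))
    (hsum2 : Summable (fun n => (βseq n) ^ 2))
    (ha : 0 < a) (hμn : ∀ n, a ≤ μseq n) (hμA : ∀ n, μseq n * ‖A‖ ^ 2 ≤ 1)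
    (x : ℕ → H₁) (u y w : ℕ → H₂) (z g : ℕ → H₁) (γ α : ℕ → ℝ)
    (hx0 : x 0 ∈ C)
    (hu : ∀ n, IsProjOn Q (A (x n)) (u n))
    (hw : ∀ n, IsDiagSubgrad Q F (εseq n) (u n) (w n))
    (hγ : ∀ n, γ n = βseq n / max (ρseq n) ‖w n‖)
    (hy : ∀ n, IsProjOn Q (u n - γ n • w n) (y n))
    (hz : ∀ n, IsProjOn C
      (x n + μseq n • (ContinuousLinearMap.adjoint A) (y n - A (x n))) (z n))
    (hg : ∀ n, IsDiagSubgrad C f (εseq n) (z n) (g n))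
    (hα : ∀ n, α n = βseq n / max (ρseq n) ‖g n‖)
    (hxn : ∀ n, IsProjOn C (z n - α n • g n) (x (n + 1)))
    (hΩne : ∃ xs, xs ∈ C ∧ (∀ y' ∈ C, 0 ≤ f xs y') ∧ A xs ∈ Q ∧ ∀ v ∈ Q, 0 ≤ F (A xs) v) :
    Tendsto (fun n => ‖x (n + 1) - z n‖) atTop (nhds 0) ∧
    Tendsto (fun n => ‖u n - A (x n)‖) atTop (nhds 0) ∧
    (∃ M : ℝ, ∀ n, ‖z n‖ ≤ M) ∧ (∃ M : ℝ, ∀ n, ‖u n‖ ≤ M) := by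
  obtain ⟨xs, hxsC, hfge, hAxsQ, hFge⟩ := hΩne
  set q : ℕ → ℝ := fun n => βseq n * εseq n / ρseq n with hqdef
  set b : ℕ → ℝ := fun n => βseq n ^ 2 with hbdef
  have hρnpos : ∀ n, 0 < ρseq n := fun n => lt_of_lt_of_le hρ (hρn n)
  have hqnn : ∀ n, 0 ≤ q n := fun n =>
    div_nonneg (mul_nonneg (hβn n).le (hεn n)) (hρnpos n).le
  have hbnn : ∀ n, 0 ≤ b n := fun n => sq_nonneg _
  -- step-size facts for γ
  have hγfacts : ∀ n, 0 ≤ γ n ∧ γ n * ‖w n‖ ≤ βseq n ∧ γ n * εseq n ≤ q n := by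
    intro n
    have hM : 0 < max (ρseq n) ‖w n‖ := lt_of_lt_of_le (hρnpos n) (le_max_left _ _)
    refine ⟨by rw [hγ n]; exact div_nonneg (hβn n).le hM.le, ?_, ?_⟩
    · rw [hγ n, div_mul_eq_mul_div, div_le_iff₀ hM]
      exact mul_le_mul_of_nonneg_left (le_max_right _ _) (hβn n).le
    · rw [hγ n, div_mul_eq_mul_div, hqdef]
      rw [div_le_div_iff₀ hM (hρnpos n)]
      have : ρseq n ≤ max (ρseq n) ‖w n‖ := le_max_left _ _
      nlinarith [mul_nonneg (hβn n).le (hεn n)]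
  have hαfacts : ∀ n, 0 ≤ α n ∧ α n * ‖g n‖ ≤ βseq n ∧ α n * εseq n ≤ q n := by
    intro n
    have hM : 0 < max (ρseq n) ‖g n‖ := lt_of_lt_of_le (hρnpos n) (le_max_left _ _)
    refine ⟨by rw [hα n]; exact div_nonneg (hβn n).le hM.le, ?_, ?_⟩
    · rw [hα n, div_mul_eq_mul_div, div_le_iff₀ hM]
      exact mul_le_mul_of_nonneg_left (le_max_right _ _) (hβn n).le
    · rw [hα n, div_mul_eq_mul_div, hqdef]
      rw [div_le_div_iff₀ hM (hρnpos n)]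
      have : ρseq n ≤ max (ρseq n) ‖g n‖ := le_max_left _ _
      nlinarith [mul_nonneg (hβn n).le (hεn n)]
  -- Claim 1
  have hC1 : ∀ n, ‖u n - A xs‖ ^ 2 ≤ ‖A (x n) - A xs‖ ^ 2 - ‖A (x n) - u n‖ ^ 2 :=
    fun n => proj_sq_le (hu n) hAxsQ
  -- Claim 2
  have hC2 : ∀ n, ‖y n - A xs‖ ^ 2 ≤ ‖u n - A xs‖ ^ 2 + 2 * q n + b n := by
    intro n
    obtain ⟨hγ0, hγw, hγε⟩ := hγfacts n
    have hp := proj_sq_le (hy n) hAxsQ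
    have hexp : ‖u n - γ n • w n - A xs‖ ^ 2
        = ‖u n - A xs‖ ^ 2 + 2 * (-(γ n)) * ⟪w n, u n - A xs⟫ + (γ n) ^ 2 * ‖w n‖ ^ 2 := by
      have h0 : u n - γ n • w n - A xs = u n + (-(γ n)) • w n - A xs := by
        rw [neg_smul]; abel
      rw [h0, expand_sq]; ring
    have hsub := hw n (A xs) hAxsQ
    have hFle : F (u n) (A xs) ≤ 0 := hFpm (A xs) hAxsQ (u n) (hu n).1 (hFge (u n) (hu n).1)
    have hip : ⟪w n, A xs - u n⟫ = -⟪w n, u n - A xs⟫ := by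
      rw [← inner_neg_right]; congr 1; abel
    have hprod : γ n * ⟪w n, A xs - u n⟫ ≤ γ n * (F (u n) (A xs) + εseq n) :=
      mul_le_mul_of_nonneg_left hsub hγ0
    rw [hip] at hprod
    have hsq : (γ n * ‖w n‖) * (γ n * ‖w n‖) ≤ βseq n * βseq n :=
      mul_self_le_mul_self (mul_nonneg hγ0 (norm_nonneg _)) hγw
    have hγF : γ n * F (u n) (A xs) ≤ 0 := mul_nonpos_of_nonneg_of_nonpos hγ0 hFle
    have hbn : b n = βseq n ^ 2 := rfl
    nlinarith [hp, hexp, hprod, hγF, hγε, hsq, hbn,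
      sq_nonneg ‖u n - γ n • w n - y n‖]
  -- Claim 3 (unified)
  obtain ⟨c, hc0, hC3⟩ : ∃ c : ℝ, 0 ≤ c ∧ ∀ n,
      ‖z n - xs‖ ^ 2 ≤ ‖x n - xs‖ ^ 2 - a * ‖u n - A (x n)‖ ^ 2 + c * (2 * q n + b n) := by
    by_cases hA : ‖A‖ = 0
    · refine ⟨0, le_refl 0, fun n => ?_⟩
      have hA0 : ∀ v : H₁, A v = 0 := by
        intro v
        have h := A.le_opNorm v
        rw [hA, zero_mul] at h
        simpa [norm_le_zero_iff] using h
      have hu0 : u n = 0 := by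
        have h2 := (hu n).2 (A xs) hAxsQ
        rw [hA0 (x n), hA0 xs] at h2
        have h3 : (0:H₂) - u n = -(u n) := by abel
        rw [h3, inner_neg_neg] at h2
        have h4 : ⟪u n, u n⟫ = ‖u n‖ ^ 2 := real_inner_self_eq_norm_sq (u n)
        have : ‖u n‖ = 0 := by nlinarith [norm_nonneg (u n)]
        simpa [norm_eq_zero] using this
      have hadj0 : (ContinuousLinearMap.adjoint A) (y n - A (x n)) = 0 := by
        have h := norm_adj A (y n - A (x n))
        rw [hA, zero_mul] at h
        simpa [norm_le_zero_iff] using h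
      have hzn := hz n
      rw [hadj0, smul_zero, add_zero] at hzn
      have hp := proj_sq_le hzn hxsC
      have h5 : ‖u n - A (x n)‖ = 0 := by rw [hu0, hA0 (x n)]; simp
      rw [h5]
      have := sq_nonneg ‖x n - z n‖
      simp only [zero_mul]
      nlinarith
    · have hApos : 0 < ‖A‖ ^ 2 := by
        have : ‖A‖ ≠ 0 := hA
        positivity
      refine ⟨1 / ‖A‖ ^ 2, by positivity, fun n => ?_⟩
      set v : H₁ := (ContinuousLinearMap.adjoint A) (y n - A (x n)) with hvdef
      have hμpos : 0 < μseq n := lt_of_lt_of_le ha (hμn n)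
      have hp := proj_sq_le (hz n) hxsC
      have hexp := expand_sq (x n) v xs (μseq n)
      have hadj : ⟪v, x n - xs⟫ = ⟪y n - A (x n), A (x n) - A xs⟫ := by
        rw [hvdef, ContinuousLinearMap.adjoint_inner_left]
        congr 1
        rw [map_sub]
      rw [hadj] at hexp
      have hpol : 2 * ⟪y n - A (x n), A (x n) - A xs⟫
          = ‖y n - A xs‖ ^ 2 - ‖y n - A (x n)‖ ^ 2 - ‖A (x n) - A xs‖ ^ 2 := by
        have h0 : (y n - A (x n)) + (A (x n) - A xs) = y n - A xs := by abel
        have h1 := norm_add_sq_real (y n - A (x n)) (A (x n) - A xs)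
        rw [h0] at h1
        linarith
      have hpolμ : μseq n * (2 * ⟪y n - A (x n), A (x n) - A xs⟫)
          = μseq n * (‖y n - A xs‖ ^ 2 - ‖y n - A (x n)‖ ^ 2 - ‖A (x n) - A xs‖ ^ 2) := by
        rw [hpol]
      have hAd : ‖v‖ ^ 2 ≤ ‖A‖ ^ 2 * ‖y n - A (x n)‖ ^ 2 := by
        have h := norm_adj A (y n - A (x n))
        rw [← hvdef] at h
        nlinarith [norm_nonneg v, norm_nonneg (y n - A (x n)), norm_nonneg A]
      have hμN : 0 ≤ μseq n * ‖y n - A (x n)‖ ^ 2 := mul_nonneg hμpos.le (sq_nonneg _)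
      have k1 := mul_le_mul_of_nonneg_left hAd (sq_nonneg (μseq n))
      have k2 := mul_le_mul_of_nonneg_right (hμA n) hμN
      have hYB : ‖y n - A xs‖ ^ 2 - ‖A (x n) - A xs‖ ^ 2
          ≤ -(‖A (x n) - u n‖ ^ 2) + (2 * q n + b n) := by
        have := hC1 n; have := hC2 n; linarith
      have k3 := mul_le_mul_of_nonneg_left hYB hμpos.le
      have hμc : μseq n ≤ 1 / ‖A‖ ^ 2 := (le_div_iff₀ hApos).mpr (hμA n)
      have k4 := mul_le_mul_of_nonneg_right hμc
        (by have := hqnn n; have := hbnn n; linarith : (0:ℝ) ≤ 2 * q n + b n)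
      have k5 := mul_le_mul_of_nonneg_right (hμn n) (sq_nonneg ‖A (x n) - u n‖)
      have hrev : ‖u n - A (x n)‖ = ‖A (x n) - u n‖ := norm_sub_rev _ _
      rw [hrev]
      nlinarith [hp, hexp, hpolμ, k1, k2, k3, k4, k5,
        sq_nonneg ‖x n + μseq n • v - z n‖]
  -- Claim 4
  have hC4 : ∀ n, ‖x (n + 1) - xs‖ ^ 2
      ≤ ‖z n - xs‖ ^ 2 - (1/2) * ‖x (n + 1) - z n‖ ^ 2 + 2 * q n + 2 * b n := by
    intro n
    obtain ⟨hα0, hαg, hαε⟩ := hαfacts n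
    have hp := proj_sq_le (hxn n) hxsC
    have he1 : ‖z n - α n • g n - xs‖ ^ 2
        = ‖z n - xs‖ ^ 2 + 2 * (-(α n)) * ⟪g n, z n - xs⟫ + (α n) ^ 2 * ‖g n‖ ^ 2 := by
      have h0 : z n - α n • g n - xs = z n + (-(α n)) • g n - xs := by rw [neg_smul]; abel
      rw [h0, expand_sq]; ring
    have he2 : ‖z n - α n • g n - x (n + 1)‖ ^ 2
        = ‖z n - x (n + 1)‖ ^ 2 + 2 * (-(α n)) * ⟪g n, z n - x (n + 1)⟫
          + (α n) ^ 2 * ‖g n‖ ^ 2 := by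
      have h0 : z n - α n • g n - x (n + 1) = z n + (-(α n)) • g n - x (n + 1) := by
        rw [neg_smul]; abel
      rw [h0, expand_sq]; ring
    have hsub := hg n xs hxsC
    have hfle : f (z n) xs ≤ 0 := hfpm xs hxsC (z n) (hz n).1 (hfge (z n) (hz n).1)
    have hip : ⟪g n, xs - z n⟫ = -⟪g n, z n - xs⟫ := by
      rw [← inner_neg_right]; congr 1; abel
    have hprod : α n * ⟪g n, xs - z n⟫ ≤ α n * (f (z n) xs + εseq n) :=
      mul_le_mul_of_nonneg_left hsub hα0
    have hαf : α n * f (z n) xs ≤ 0 := mul_nonpos_of_nonneg_of_nonpos hα0 hfle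
    have hCS : ⟪g n, z n - x (n + 1)⟫ ≤ ‖g n‖ * ‖z n - x (n + 1)‖ := real_inner_le_norm _ _
    have hpCS : α n * ⟪g n, z n - x (n + 1)⟫ ≤ α n * (‖g n‖ * ‖z n - x (n + 1)‖) :=
      mul_le_mul_of_nonneg_left hCS hα0
    have hβd : (α n * ‖g n‖) * ‖z n - x (n + 1)‖ ≤ βseq n * ‖z n - x (n + 1)‖ :=
      mul_le_mul_of_nonneg_right hαg (norm_nonneg _)
    have hyoung : 2 * (βseq n * ‖z n - x (n + 1)‖)
        ≤ 2 * b n + (1/2) * ‖z n - x (n + 1)‖ ^ 2 := by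
      have := sq_nonneg (2 * βseq n - ‖z n - x (n + 1)‖)
      simp only [hbdef]
      nlinarith
    have hrev : ‖x (n + 1) - z n‖ = ‖z n - x (n + 1)‖ := norm_sub_rev _ _
    rw [hrev]
    nlinarith [hp, he1, he2, hip, hprod, hαf, hpCS, hβd, hyoung, hαε]
  -- the recursion
  set s : ℕ → ℝ := fun n => ‖x n - xs‖ ^ 2 with hsdef
  set t : ℕ → ℝ := fun n =>
    a * ‖u n - A (x n)‖ ^ 2 + (1/2) * ‖x (n + 1) - z n‖ ^ 2 with htdef
  set e : ℕ → ℝ := fun n => (2 * c + 2) * q n + (c + 2) * b n with hedef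
  have htnn : ∀ n, 0 ≤ t n := fun n =>
    add_nonneg (mul_nonneg ha.le (sq_nonneg _)) (by positivity)
  have henn : ∀ n, 0 ≤ e n := fun n =>
    add_nonneg (mul_nonneg (by linarith) (hqnn n)) (mul_nonneg (by linarith) (hbnn n))
  have hesum : Summable e := by
    rw [hedef]
    exact (hsum1.mul_left (2 * c + 2)).add (hsum2.mul_left (c + 2))
  have hrec : ∀ n, s (n + 1) + t n ≤ s n + e n := by
    intro n
    have h3 := hC3 n
    have h4 := hC4 n
    simp only [hsdef, htdef, hedef]
    nlinarith [h3, h4]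
  have hpartial : ∀ N, s N + ∑ n ∈ Finset.range N, t n
      ≤ s 0 + ∑ n ∈ Finset.range N, e n := by
    intro N
    induction N with
    | zero => simp
    | succ N ih =>
      rw [Finset.sum_range_succ, Finset.sum_range_succ]
      have := hrec N
      linarith
  set E : ℝ := ∑' n, e n with hEdef
  have hsumle : ∀ N, ∑ n ∈ Finset.range N, e n ≤ E :=
    fun N => Summable.sum_le_tsum _ (fun i _ => henn i) hesum
  have hsnn : ∀ n, 0 ≤ s n := fun n => sq_nonneg _
  have htsum : Summable t := by
    apply summable_of_sum_range_le htnn (c := s 0 + E)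
    intro N
    have h1 := hpartial N
    have h2 := hsumle N
    have h3 := hsnn N
    linarith
  have ht0 : Tendsto t atTop (nhds 0) := htsum.tendsto_atTop_zero
  have hE0 : 0 ≤ E := tsum_nonneg henn
  have hsbound : ∀ n, s n ≤ s 0 + E := by
    intro n
    have h1 := hpartial n
    have h2 : 0 ≤ ∑ k ∈ Finset.range n, t k := Finset.sum_nonneg fun i _ => htnn i
    have h3 := hsumle n
    linarith
  constructor
  · -- ‖x (n+1) - z n‖ → 0
    apply tendsto_norm_of_sq (fun n => norm_nonneg _)
    have hle : ∀ n, ‖x (n + 1) - z n‖ ^ 2 ≤ 2 * t n := by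
      intro n
      have h := mul_nonneg ha.le (sq_nonneg ‖u n - A (x n)‖)
      simp only [htdef]
      nlinarith
    have h2 : Tendsto (fun n => 2 * t n) atTop (nhds (2 * 0)) := ht0.const_mul 2
    rw [mul_zero] at h2
    exact squeeze_zero (fun n => sq_nonneg _) hle h2
  refine ⟨?_, ?_, ?_⟩
  · -- ‖u n - A (x n)‖ → 0
    apply tendsto_norm_of_sq (fun n => norm_nonneg _)
    have hle : ∀ n, ‖u n - A (x n)‖ ^ 2 ≤ (1 / a) * t n := by
      intro n
      have h1 : a * ‖u n - A (x n)‖ ^ 2 ≤ t n := by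
        simp only [htdef]
        nlinarith [sq_nonneg ‖x (n + 1) - z n‖]
      have h2 := mul_le_mul_of_nonneg_left h1 (by positivity : (0:ℝ) ≤ 1 / a)
      calc ‖u n - A (x n)‖ ^ 2 = (1 / a) * (a * ‖u n - A (x n)‖ ^ 2) := by
            field_simp
        _ ≤ (1 / a) * t n := h2
    have h2 : Tendsto (fun n => (1 / a) * t n) atTop (nhds ((1 / a) * 0)) :=
      ht0.const_mul (1 / a)
    rw [mul_zero] at h2
    exact squeeze_zero (fun n => sq_nonneg _) hle h2
  · -- z bounded
    refine ⟨Real.sqrt (s 0 + E) + ‖xs‖, fun n => ?_⟩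
    have hzsq : ‖z n - xs‖ ^ 2 ≤ s 0 + E := by
      have h1 := hC3 n
      have h2 := hpartial n
      have h3 := hsumle (n + 1)
      rw [Finset.sum_range_succ] at h3
      have h4 : 0 ≤ ∑ k ∈ Finset.range n, t k := Finset.sum_nonneg fun i _ => htnn i
      have h5 : 0 ≤ a * ‖u n - A (x n)‖ ^ 2 := mul_nonneg ha.le (sq_nonneg _)
      have h6 := hqnn n
      have h7 := hbnn n
      simp only [hsdef, hedef] at *
      nlinarith [mul_nonneg hc0 h6, mul_nonneg hc0 h7]
    have hd : ‖z n - xs‖ ≤ Real.sqrt (s 0 + E) := by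
      rw [← Real.sqrt_sq (norm_nonneg (z n - xs))]
      exact Real.sqrt_le_sqrt hzsq
    have := norm_add_le (z n - xs) xs
    rw [sub_add_cancel] at this
    linarith
  · -- u bounded
    refine ⟨Real.sqrt (‖A‖ ^ 2 * (s 0 + E)) + ‖A xs‖, fun n => ?_⟩
    have h1 := hC1 n
    have hAx : ‖A (x n) - A xs‖ ≤ ‖A‖ * ‖x n - xs‖ := by
      rw [← map_sub]
      exact A.le_opNorm _
    have h2 : ‖A (x n) - A xs‖ ^ 2 ≤ ‖A‖ ^ 2 * ‖x n - xs‖ ^ 2 := by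
      have := pow_le_pow_left₀ (norm_nonneg _) hAx 2
      calc ‖A (x n) - A xs‖ ^ 2 ≤ (‖A‖ * ‖x n - xs‖) ^ 2 := this
        _ = ‖A‖ ^ 2 * ‖x n - xs‖ ^ 2 := by ring
    have h3 : ‖A‖ ^ 2 * ‖x n - xs‖ ^ 2 ≤ ‖A‖ ^ 2 * (s 0 + E) :=
      mul_le_mul_of_nonneg_left (hsbound n) (sq_nonneg _)
    have husq : ‖u n - A xs‖ ^ 2 ≤ ‖A‖ ^ 2 * (s 0 + E) := by
      nlinarith [sq_nonneg ‖A (x n) - u n‖]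
    have hd : ‖u n - A xs‖ ≤ Real.sqrt (‖A‖ ^ 2 * (s 0 + E)) := by
      rw [← Real.sqrt_sq (norm_nonneg (u n - A xs))]
      exact Real.sqrt_le_sqrt husq
    have := norm_add_le (u n - A xs) (A xs)
    rw [sub_add_cancel] at this
    linarith
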